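/- Let α > 0, let f ∈ L¹[−π,π] with f ≥ 0, let b ∈ (−π,0) ∪ (0,π), let f_H be the polarization of f with respect to b, and let u_f and u_{f_H} be the solutions of the Robin problem with heat sources f and f_H respectively. Then for every p with 1 ≤ p ≤ ∞, the L^p norm of u_f on [−π,π] is at most the L^p norm of u_{f_H} on [−π,π]. -/

import Mathlib

open MeasureTheory Real Set
open scoped ENNReal

/-- The constant `c_α = α/(1+απ)`. -/
noncomputable def cA (α : ℝ) : ℝ := α / (1 + α * π)

/-- The Green's function of the Robin problem on `[-π, π]`. -/
noncomputable def robinGreen (α x y : ℝ) : ℝ :=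
  -(1/2) * cA α * x * y - (1/2) * |x - y| + 1 / (2 * cA α)

/-- The solution of the Robin problem with heat source `f`. -/
noncomputable def robinSol (α : ℝ) (f : ℝ → ℝ) (x : ℝ) : ℝ :=
  ∫ y in (-π)..π, robinGreen α x y * f y

/-- The polarization (towards zero) of `f : [-π,π] → ℝ` with respect to `b`. -/
noncomputable def polar (b : ℝ) (f : ℝ → ℝ) (x : ℝ) : ℝ :=
  if 0 < b then
    if x < 2 * b - π then f x
    else if x ≤ b then max (f x) (f (2 * b - x))
    else min (f x) (f (2 * b - x))
  else
    if x ≤ b then min (f x) (f (2 * b - x))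
    else if x ≤ 2 * b + π then max (f x) (f (2 * b - x))
    else f x

/-!
Fix `0 < b < π`, write `σ x = 2b - x`, `u = u_f`, `v = u_{f_H}`, and pair each `y ∈ [2b - π, b]`
with its mirror image `σ y ∈ [b, π]`: polarization keeps `f` on `[-π, 2b - π)` and puts the larger
of `f y, f (σ y)` at `y`, the smaller at `σ y`. For `x ∈ [-π, b]` and `y ∈ [2b - π, b]` the Green's
function satisfies `G(x, σy) ≤ G(x, y)`, `G(σx, σy) ≤ G(x, y)` and
`G(σx, y) + G(σx, σy) ≤ G(x, y) + G(x, σy)`. These give `u ≤ v` on `[-π, b]` and, for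
`x ∈ [2b - π, b]`, `u (σ x) ≤ v x` and `u x + u (σ x) ≤ v x + v (σ x)`: on every pair `{x, σ x}`
the values of `u` are weakly majorized by those of `v`. Hence `∫ φ ∘ u ≤ ∫ φ ∘ v` for every `φ`
that is convex and nondecreasing on `[0, ∞)`; `φ t = |t| ^ p` gives the claim for `p < ∞` and
`φ t = (|t| - ‖v‖_∞)⁺` gives it for `p = ∞`. The case `-π < b < 0` is the mirror image of this
one under `x ↦ -x`.
-/

theorem ConvexOn.map_add_map_le {s : Set ℝ} {φ : ℝ → ℝ} (hφ : ConvexOn ℝ s φ)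
    {a b x y : ℝ} (ha : a ∈ s) (hb : b ∈ s) (hax : a ≤ x) (hxb : x ≤ b) (hsum : x + y = a + b) :
    φ x + φ y ≤ φ a + φ b := by
  rcases (hax.trans hxb).eq_or_lt with rfl | hab
  · obtain rfl : x = a := le_antisymm hxb hax
    obtain rfl : y = x := by linarith
    rfl
  have hba : b - a ≠ 0 := by linarith
  set t := (b - x) / (b - a)
  have ht0 : 0 ≤ t := div_nonneg (by linarith) (by linarith)
  have ht1 : 0 ≤ 1 - t := by
    rw [one_sub_div hba]; exact div_nonneg (by linarith) (by linarith)
  have hx : t • a + (1 - t) • b = x := by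
    simp only [smul_eq_mul, t]; field_simp; ring
  have hy : (1 - t) • a + t • b = y := by
    simp only [smul_eq_mul, t]; field_simp; linear_combination (a - b) * hsum
  have h₁ := hφ.2 ha hb ht0 ht1 (by ring)
  have h₂ := hφ.2 ha hb ht1 ht0 (by ring)
  rw [hx] at h₁
  rw [hy] at h₂
  simp only [smul_eq_mul] at h₁ h₂
  linarith

theorem ConvexOn.map_add_map_le_of_majorized {φ : ℝ → ℝ} (hφ : ConvexOn ℝ (Ici 0) φ)
    (hφm : MonotoneOn φ (Ici 0)) {A B V W : ℝ} (hA : 0 ≤ A) (hB : 0 ≤ B) (hW : 0 ≤ W)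
    (hAV : A ≤ V) (hBV : B ≤ V) (hsum : A + B ≤ V + W) :
    φ A + φ B ≤ φ V + φ W := by
  wlog hBA : B ≤ A generalizing A B
  · linarith [this hB hA hBV hAV (by linarith) (by linarith)]
  -- `(A + B - W', W')` has the sum of `(A, B)`, is more spread out, and lies below `(V, W)`.
  set W' := max (A + B - V) 0
  have hW'B : W' ≤ B := max_le (by linarith) hB
  have hW' : (0 : ℝ) ≤ W' := le_max_right _ _
  calc φ A + φ B = φ B + φ A := add_comm _ _
    _ ≤ φ W' + φ (A + B - W') :=
        hφ.map_add_map_le hW' (by simp only [mem_Ici]; linarith) hW'B (by linarith) (by ring)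
    _ ≤ φ W + φ V := by
        gcongr ?_ + ?_
        · exact hφm hW' hW (max_le (by linarith) hW)
        · exact hφm (by simp only [mem_Ici]; linarith) (hA.trans hAV)
            (by linarith [le_max_left (A + B - V) 0])
    _ = φ V + φ W := add_comm _ _

theorem mul_add_mul_le_mul_max_add_mul_min {a a' c c' s t : ℝ} (ha : a' ≤ a) (hc : c' ≤ a)
    (hac : a' + c' ≤ a + c) (hs : 0 ≤ s) (ht : 0 ≤ t) :
    a' * s + c' * t ≤ a * max s t + c * min s t := by
  rcases le_total t s with h | h
  · rw [max_eq_left h, min_eq_right h]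
    nlinarith [mul_le_mul_of_nonneg_left h (sub_nonneg.2 ha)]
  · rw [max_eq_right h, min_eq_left h]
    nlinarith [mul_le_mul_of_nonneg_left h (sub_nonneg.2 hc)]

section reflect
variable {h : ℝ → ℝ} {l b r : ℝ}

theorem IntervalIntegrable.mono_Icc (hh : IntervalIntegrable h volume l r) {c d : ℝ}
    (hc : c ∈ Icc l r) (hd : d ∈ Icc l r) : IntervalIntegrable h volume c d :=
  hh.mono_set (uIcc_subset_uIcc (Icc_subset_uIcc hc) (Icc_subset_uIcc hd))

theorem IntervalIntegrable.comp_reflect (hh : IntervalIntegrable h volume l r)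
    (hl : l ≤ 2 * b - r) (hbr : b ≤ r) :
    IntervalIntegrable (fun y => h (2 * b - y)) volume (2 * b - r) b := by
  simpa only [show 2 * b - b = b by ring] using
    ((hh.mono_Icc ⟨by linarith, hbr⟩ ⟨by linarith, le_rfl⟩).comp_sub_left (2 * b)).symm

theorem intervalIntegral.integral_eq_add_integral_add_reflect
    (hh : IntervalIntegrable h volume l r) (hl : l ≤ 2 * b - r) (hbr : b ≤ r) :
    ∫ y in l..r, h y =
      (∫ y in l..(2 * b - r), h y) + ∫ y in (2 * b - r)..b, (h y + h (2 * b - y)) := by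
  have hreflect : ∫ y in (2 * b - r)..b, h (2 * b - y) = ∫ y in b..r, h y := by
    simpa only [show 2 * b - b = b by ring, show 2 * b - (2 * b - r) = r by ring] using
      intervalIntegral.integral_comp_sub_left h (a := 2 * b - r) (b := b) (2 * b)
  have hmem : ∀ c, l ≤ c → c ≤ r → c ∈ Icc l r := fun c h₁ h₂ => ⟨h₁, h₂⟩
  rw [intervalIntegral.integral_add
      (hh.mono_Icc (hmem _ hl (by linarith)) (hmem _ (by linarith) hbr)) (hh.comp_reflect hl hbr),
    hreflect,
    ← intervalIntegral.integral_add_adjacent_intervals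
      (hh.mono_Icc (hmem _ le_rfl (by linarith)) (hmem _ hl (by linarith)))
      (hh.mono_Icc (hmem _ hl (by linarith)) (hmem _ (by linarith) le_rfl)),
    ← intervalIntegral.integral_add_adjacent_intervals
      (hh.mono_Icc (hmem _ hl (by linarith)) (hmem _ (by linarith) hbr))
      (hh.mono_Icc (hmem _ (by linarith) hbr) (hmem _ (by linarith) le_rfl))]

end reflect

theorem intervalIntegral.integral_comp_le_of_majorized {φ u v : ℝ → ℝ} {l b r : ℝ}
    (hl : l ≤ 2 * b - r) (hbr : b ≤ r) (hφc : Continuous φ) (hφm : MonotoneOn φ (Ici 0))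
    (hφ : ConvexOn ℝ (Ici 0) φ) (hu : ContinuousOn u (Icc l r)) (hv : ContinuousOn v (Icc l r))
    (hu0 : ∀ x ∈ Icc l r, 0 ≤ u x) (hv0 : ∀ x ∈ Icc l r, 0 ≤ v x)
    (hle : ∀ x ∈ Icc l b, u x ≤ v x)
    (hle_reflect : ∀ x ∈ Icc (2 * b - r) b, u (2 * b - x) ≤ v x)
    (hadd_le : ∀ x ∈ Icc (2 * b - r) b, u x + u (2 * b - x) ≤ v x + v (2 * b - x)) :
    ∫ x in l..r, φ (u x) ≤ ∫ x in l..r, φ (v x) := by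
  have hlr : l ≤ r := by linarith
  have hφu : IntervalIntegrable (fun x => φ (u x)) volume l r :=
    (hφc.comp_continuousOn hu).intervalIntegrable_of_Icc hlr
  have hφv : IntervalIntegrable (fun x => φ (v x)) volume l r :=
    (hφc.comp_continuousOn hv).intervalIntegrable_of_Icc hlr
  rw [intervalIntegral.integral_eq_add_integral_add_reflect hφu hl hbr,
    intervalIntegral.integral_eq_add_integral_add_reflect hφv hl hbr]
  gcongr ?_ + ?_
  · refine intervalIntegral.integral_mono_on hl
      (hφu.mono_Icc ⟨le_rfl, hlr⟩ ⟨hl, by linarith⟩)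
      (hφv.mono_Icc ⟨le_rfl, hlr⟩ ⟨hl, by linarith⟩) fun x hx => ?_
    exact hφm (hu0 x ⟨hx.1, by linarith [hx.2]⟩) (hv0 x ⟨hx.1, by linarith [hx.2]⟩)
      (hle x ⟨hx.1, by linarith [hx.2]⟩)
  · refine intervalIntegral.integral_mono_on (by linarith)
      ((hφu.mono_Icc ⟨hl, by linarith⟩ ⟨by linarith, hbr⟩).add (hφu.comp_reflect hl hbr))
      ((hφv.mono_Icc ⟨hl, by linarith⟩ ⟨by linarith, hbr⟩).add (hφv.comp_reflect hl hbr))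
      fun x hx => ?_
    have hx' : x ∈ Icc l r := ⟨by linarith [hx.1], by linarith [hx.2]⟩
    have hσx : 2 * b - x ∈ Icc l r := ⟨by linarith [hx.2], by linarith [hx.1]⟩
    exact hφ.map_add_map_le_of_majorized hφm (hu0 x hx') (hu0 _ hσx) (hv0 _ hσx)
      (hle x ⟨hx'.1, hx.2⟩) (hle_reflect x hx) (hadd_le x hx)

theorem eLpNormEssSup_le_of_forall_integral_le {X : Type*} [MeasurableSpace X]
    {μ : Measure X} {u v : X → ℝ} (hu : ∀ c, Integrable (fun x => max (|u x| - c) 0) μ)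
    (h : ∀ c, ∫ x, max (|u x| - c) 0 ∂μ ≤ ∫ x, max (|v x| - c) 0 ∂μ) :
    eLpNormEssSup u μ ≤ eLpNormEssSup v μ := by
  rcases eq_or_ne (eLpNormEssSup v μ) ∞ with hv_top | hv_top
  · exact hv_top ▸ le_top
  set c := (eLpNormEssSup v μ).toReal
  have hv_le : ∀ᵐ x ∂μ, |v x| ≤ c := by
    filter_upwards [ae_le_eLpNormEssSup (f := v)] with x hx
    simpa using ENNReal.toReal_mono hv_top hx
  have hv_zero : ∫ x, max (|v x| - c) 0 ∂μ = 0 :=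
    integral_eq_zero_of_ae (hv_le.mono fun x hx => max_eq_right (by linarith))
  have hu_zero : (fun x => max (|u x| - c) 0) =ᵐ[μ] 0 := by
    refine (integral_eq_zero_iff_of_nonneg (fun x => le_max_right _ _) (hu c)).1 ?_
    exact le_antisymm (hv_zero ▸ h c) (integral_nonneg fun x => le_max_right _ _)
  rw [← ENNReal.ofReal_toReal hv_top]
  exact eLpNormEssSup_le_of_ae_bound (hu_zero.mono fun x hx => by simpa using hx)

theorem eLpNorm_le_of_forall_convexOn_integral_le {X : Type*} [TopologicalSpace X] [T2Space X]
    [MeasurableSpace X] [OpensMeasurableSpace X] {μ : Measure X} [IsFiniteMeasureOnCompacts μ]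
    {K : Set X} (hK : IsCompact K) {u v : X → ℝ} (hu : ContinuousOn u K) (hv : ContinuousOn v K)
    (h : ∀ φ : ℝ → ℝ, Continuous φ → MonotoneOn φ (Ici 0) → ConvexOn ℝ (Ici 0) φ →
      ∫ x in K, φ (u x) ∂μ ≤ ∫ x in K, φ (v x) ∂μ)
    {p : ℝ≥0∞} (hp : 1 ≤ p) :
    eLpNorm u p (μ.restrict K) ≤ eLpNorm v p (μ.restrict K) := by
  have hint : ∀ {w : X → ℝ} {φ : ℝ → ℝ}, ContinuousOn w K → Continuous φ →
      Integrable (fun x => φ (w x)) (μ.restrict K) := fun hw hφ =>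
    (hφ.comp_continuousOn hw).integrableOn_compact hK
  rcases eq_or_ne p ∞ with rfl | hp_top
  · simp only [eLpNorm_exponent_top]
    refine eLpNormEssSup_le_of_forall_integral_le
      (fun c => hint (φ := fun t => max (|t| - c) 0) hu (by fun_prop)) fun c =>
        h (fun t => max (|t| - c) 0) (by fun_prop) (fun s hs t ht hst => ?_) ?_
    · simp only [abs_of_nonneg (mem_Ici.1 hs), abs_of_nonneg (mem_Ici.1 ht)]
      gcongr
    · exact ((convexOn_norm convex_univ).sub (concaveOn_const c convex_univ)).sup
        (convexOn_const 0 convex_univ) |>.subset (subset_univ _) (convex_Ici 0)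
  have hp0 : p ≠ 0 := (zero_lt_one.trans_le hp).ne'
  have hr : 1 ≤ p.toReal := by simpa using ENNReal.toReal_mono hp_top hp
  have hrpow : Continuous fun t : ℝ => |t| ^ p.toReal :=
    continuous_abs.rpow_const fun _ => Or.inr (by linarith)
  have hmemLp : ∀ {w : X → ℝ}, ContinuousOn w K → MemLp w p (μ.restrict K) := fun hw =>
    (integrable_norm_rpow_iff (hw.aestronglyMeasurable hK.measurableSet) hp0 hp_top).1
      (hint hw hrpow)
  rw [(hmemLp hu).eLpNorm_eq_integral_rpow_norm hp0 hp_top,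
    (hmemLp hv).eLpNorm_eq_integral_rpow_norm hp0 hp_top]
  gcongr ENNReal.ofReal (?_ ^ _)
  refine h _ hrpow (fun s hs t ht hst => ?_) ?_
  · simp only [abs_of_nonneg (mem_Ici.1 hs), abs_of_nonneg (mem_Ici.1 ht)]
    gcongr
  · exact (convexOn_rpow hr).congr fun t ht => by simp only [abs_of_nonneg (mem_Ici.1 ht)]

theorem eLpNorm_comp_neg_restrict_Icc {E : Type*} [NormedAddCommGroup E] {w : ℝ → E} {a : ℝ}
    {p : ℝ≥0∞} (hw : AEStronglyMeasurable w (volume.restrict (Icc (-a) a))) :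
    eLpNorm (fun x => w (-x)) p (volume.restrict (Icc (-a) a)) =
      eLpNorm w p (volume.restrict (Icc (-a) a)) := by
  have hneg : MeasurePreserving Neg.neg (volume.restrict (Icc (-a) a))
      (volume.restrict (Icc (-a) a)) := by
    have := (Measure.measurePreserving_neg (volume : Measure ℝ)).restrict_preimage
      (measurableSet_Icc (a := -a) (b := a))
    have hpre : Neg.neg ⁻¹' Icc (-a) a = Icc (-a) a := by
      ext x
      simp only [mem_preimage, mem_Icc]
      constructor <;> intro h <;> constructor <;> linarith [h.1, h.2]
    rwa [hpre] at this
  exact eLpNorm_comp_measurePreserving hw hneg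

theorem continuous_intervalIntegral_mul_of_abs_sub_le {k : ℝ → ℝ → ℝ} {f : ℝ → ℝ}
    {a b L : ℝ} (hab : a ≤ b) (hk : ∀ x, ContinuousOn (k x) (Icc a b))
    (hkL : ∀ x x', ∀ y ∈ Icc a b, |k x y - k x' y| ≤ L * |x - x'|)
    (hf : IntervalIntegrable f volume a b) :
    Continuous fun x => ∫ y in a..b, k x y * f y := by
  have hkf : ∀ x, IntervalIntegrable (fun y => k x y * f y) volume a b := fun x =>
    hf.continuousOn_mul (by rw [uIcc_of_le hab]; exact hk x)
  refine (LipschitzWith.of_dist_le' (K := L * ∫ y in a..b, |f y|) fun x x' => ?_).continuous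
  rw [dist_eq_norm, ← intervalIntegral.integral_sub (hkf x) (hkf x'), Real.dist_eq,
    mul_assoc, mul_comm (∫ y in a..b, |f y|), ← mul_assoc,
    ← intervalIntegral.integral_const_mul]
  refine intervalIntegral.norm_integral_le_of_norm_le hab
    (Filter.Eventually.of_forall fun y hy => ?_) (hf.abs.const_mul _)
  rw [← sub_mul, norm_mul, Real.norm_eq_abs, Real.norm_eq_abs]
  exact mul_le_mul_of_nonneg_right (hkL x x' y (Ioc_subset_Icc_self hy)) (abs_nonneg _)

theorem cA_pos {α : ℝ} (hα : 0 < α) : 0 < cA α :=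
  div_pos hα (by positivity)

theorem cA_mul_pi_lt_one {α : ℝ} (hα : 0 < α) : cA α * π < 1 := by
  rw [cA, div_mul_eq_mul_div, div_lt_one (by positivity)]
  linarith

namespace robinGreen

variable {α x y b : ℝ}

theorem comm (α x y : ℝ) : robinGreen α x y = robinGreen α y x := by
  rw [robinGreen, robinGreen, abs_sub_comm]; ring

theorem neg_neg (α x y : ℝ) : robinGreen α (-x) (-y) = robinGreen α x y := by
  rw [robinGreen, robinGreen, show -x - -y = -(x - y) by ring, abs_neg]; ring

theorem two_mul_cA_mul (hα : 0 < α) (hxy : x ≤ y) :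
    2 * cA α * robinGreen α x y = (1 + cA α * x) * (1 - cA α * y) := by
  have := (cA_pos hα).ne'
  rw [robinGreen, abs_of_nonpos (by linarith)]
  field_simp
  ring

theorem nonneg (hα : 0 < α) (hx : x ∈ Icc (-π) π) (hy : y ∈ Icc (-π) π) :
    0 ≤ robinGreen α x y := by
  wlog hxy : x ≤ y generalizing x y
  · exact comm α x y ▸ this hy hx (by linarith)
  have hc := cA_pos hα
  have hcπ := cA_mul_pi_lt_one hα
  have h₁ : 0 ≤ 1 + cA α * x := by nlinarith [hx.1]
  have h₂ : 0 ≤ 1 - cA α * y := by nlinarith [hy.2]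
  have := two_mul_cA_mul hα hxy
  nlinarith [mul_nonneg h₁ h₂]

theorem reflect_right_le (hα : 0 < α) (hb : 0 ≤ b) (hx : x ∈ Icc (-π) b)
    (hy : y ∈ Icc (2 * b - π) b) : robinGreen α x (2 * b - y) ≤ robinGreen α x y := by
  have hc := cA_pos hα
  have hcπ := cA_mul_pi_lt_one hα
  obtain ⟨hx₁, hx₂⟩ := hx
  obtain ⟨hy₁, hy₂⟩ := hy
  rw [robinGreen, robinGreen, abs_of_nonpos (by linarith : x - (2 * b - y) ≤ 0)]
  rcases le_total x y with hxy | hxy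
  · rw [abs_of_nonpos (by linarith : x - y ≤ 0)]
    nlinarith [mul_nonneg (by nlinarith : 0 ≤ 1 + cA α * x) (by linarith : 0 ≤ b - y)]
  · rw [abs_of_nonneg (by linarith : 0 ≤ x - y)]
    rcases le_total 0 x with hx0 | hx0
    · nlinarith [mul_nonneg (mul_nonneg hc.le hx0) (by linarith : 0 ≤ b - y)]
    · nlinarith [mul_nonneg (mul_nonneg hc.le (by linarith : 0 ≤ -x))
          (by linarith : 0 ≤ π - (b - y)),
        mul_nonneg (by linarith : 0 ≤ 1 - cA α * π) (by linarith : 0 ≤ -x)]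

theorem reflect_reflect_le (hα : 0 < α) (hb : 0 ≤ b) (hx : x ≤ b) (hy : y ≤ b) :
    robinGreen α (2 * b - x) (2 * b - y) ≤ robinGreen α x y := by
  rw [robinGreen, robinGreen, show 2 * b - x - (2 * b - y) = -(x - y) by ring, abs_neg]
  nlinarith [mul_nonneg (mul_nonneg (cA_pos hα).le hb) (by linarith : 0 ≤ 2 * b - x - y)]

theorem reflect_add_reflect_le (hα : 0 < α) (hb : 0 ≤ b) (hx : x ≤ b) :
    robinGreen α (2 * b - x) y + robinGreen α (2 * b - x) (2 * b - y) ≤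
      robinGreen α x y + robinGreen α x (2 * b - y) := by
  rw [robinGreen, robinGreen, robinGreen, robinGreen,
    show x - (2 * b - y) = -(2 * b - x - y) by ring, abs_neg,
    show 2 * b - x - (2 * b - y) = -(x - y) by ring, abs_neg]
  nlinarith [mul_nonneg (mul_nonneg (cA_pos hα).le hb) (by linarith : 0 ≤ b - x)]

theorem continuous (α x : ℝ) : Continuous (robinGreen α x) := by
  unfold robinGreen; fun_prop

theorem abs_sub_le (α : ℝ) {x x' y : ℝ} (hy : |y| ≤ π) :
    |robinGreen α x y - robinGreen α x' y| ≤ (|cA α| * π + 1) / 2 * |x - x'| := by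
  have h₁ : |cA α * (x - x') * y| ≤ |cA α| * π * |x - x'| := by
    rw [abs_mul, abs_mul]
    nlinarith [mul_nonneg (abs_nonneg (cA α)) (abs_nonneg (x - x'))]
  have h₂ : |(|x - y| - |x' - y|)| ≤ |x - x'| := by
    simpa only [sub_sub_sub_cancel_right] using abs_abs_sub_abs_le_abs_sub (x - y) (x' - y)
  calc |robinGreen α x y - robinGreen α x' y|
      = |cA α * (x - x') * y + (|x - y| - |x' - y|)| / 2 := by
        rw [robinGreen, robinGreen, ← abs_neg, ← abs_two, ← abs_div]
        ring_nf
    _ ≤ (|cA α| * π * |x - x'| + |x - x'|) / 2 := by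
        gcongr; exact (abs_add_le _ _).trans (add_le_add h₁ h₂)
    _ = (|cA α| * π + 1) / 2 * |x - x'| := by ring

end robinGreen

section polar

variable {b y : ℝ} {f : ℝ → ℝ}

theorem polar_of_lt (hb : 0 < b) (hy : y < 2 * b - π) : polar b f y = f y := by
  rw [polar, if_pos hb, if_pos hy]

theorem polar_of_mem_Icc (hb : 0 < b) (hy : y ∈ Icc (2 * b - π) b) :
    polar b f y = max (f y) (f (2 * b - y)) := by
  rw [polar, if_pos hb, if_neg (not_lt.2 hy.1), if_pos hy.2]

theorem polar_of_le (hb : 0 < b) (hbπ : b < π) (hy : b ≤ y) :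
    polar b f y = min (f y) (f (2 * b - y)) := by
  rcases hy.eq_or_lt with rfl | hy
  · rw [polar_of_mem_Icc hb ⟨by linarith, le_rfl⟩, show 2 * b - b = b by ring, max_self,
      min_self]
  · rw [polar, if_pos hb, if_neg (not_lt.2 (by linarith)), if_neg (not_le.2 hy)]

theorem polar_reflect (hb : 0 < b) (hbπ : b < π) (hy : y ≤ b) :
    polar b f (2 * b - y) = min (f y) (f (2 * b - y)) := by
  rw [polar_of_le hb hbπ (by linarith), show 2 * b - (2 * b - y) = y by ring, min_comm]

theorem polar_nonneg (hb : 0 < b) (hbπ : b < π) (hf0 : ∀ y ∈ Icc (-π) π, 0 ≤ f y)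
    (hy : y ∈ Icc (-π) π) : 0 ≤ polar b f y := by
  rcases lt_or_ge y (2 * b - π) with h | h
  · rw [polar_of_lt hb h]; exact hf0 y hy
  rcases le_total y b with h' | h'
  · rw [polar_of_mem_Icc hb ⟨h, h'⟩]; exact (hf0 y hy).trans (le_max_left _ _)
  · rw [polar_of_le hb hbπ h']
    exact le_min (hf0 y hy) (hf0 (2 * b - y) ⟨by linarith [hy.2], by linarith [hy.1]⟩)

theorem intervalIntegrable_polar (hb : 0 < b) (hbπ : b < π)
    (hf : IntervalIntegrable f volume (-π) π) :
    IntervalIntegrable (polar b f) volume (-π) π := by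
  have hl : -π ≤ 2 * b - π := by linarith
  have hreflect := hf.comp_reflect hl hbπ.le
  have h₁ : IntervalIntegrable (polar b f) volume (-π) (2 * b - π) := by
    rw [intervalIntegrable_iff_integrableOn_Ioo_of_le hl]
    exact ((intervalIntegrable_iff_integrableOn_Ioo_of_le hl).1
      (hf.mono_Icc ⟨le_rfl, by linarith⟩ ⟨hl, by linarith⟩)).congr_fun
      (fun y hy => (polar_of_lt hb hy.2).symm) measurableSet_Ioo
  have h₂ : IntervalIntegrable (polar b f) volume (2 * b - π) b := by
    rw [intervalIntegrable_iff_integrableOn_Icc_of_le (by linarith)] at hreflect ⊢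
    exact IntegrableOn.congr_fun (((intervalIntegrable_iff_integrableOn_Icc_of_le (by linarith)).1
      (hf.mono_Icc ⟨hl, by linarith⟩ ⟨by linarith, hbπ.le⟩)).sup hreflect)
      (fun y hy => (polar_of_mem_Icc hb hy).symm) measurableSet_Icc
  have h₃ : IntervalIntegrable (polar b f) volume b π := by
    have hreflect' : IntervalIntegrable (fun y => f (2 * b - y)) volume b π := by
      simpa only [show 2 * b - (2 * b - π) = π by ring, show 2 * b - b = b by ring] using
        ((hf.mono_Icc ⟨hl, by linarith⟩ ⟨by linarith, hbπ.le⟩).comp_sub_left (2 * b)).symm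
    rw [intervalIntegrable_iff_integrableOn_Icc_of_le hbπ.le] at hreflect' ⊢
    exact IntegrableOn.congr_fun (((intervalIntegrable_iff_integrableOn_Icc_of_le hbπ.le).1
      (hf.mono_Icc ⟨by linarith, hbπ.le⟩ ⟨by linarith, le_rfl⟩)).inf hreflect')
      (fun y hy => (polar_of_le hb hbπ hy.1).symm) measurableSet_Icc
  exact (h₁.trans h₂).trans h₃

theorem polar_neg (hb : b < 0) (hπb : -π < b) (x : ℝ) :
    polar b f x = polar (-b) (fun t => f (-t)) (-x) := by
  have hσ : -(2 * -b - -x) = 2 * b - x := by ring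
  rw [polar, polar, if_neg (not_lt.2 hb.le), if_pos (neg_pos.2 hb)]
  simp only [_root_.neg_neg, hσ]
  split_ifs <;> first
    | rfl
    | (exfalso; linarith)
    | (obtain rfl : x = b := by linarith
       rw [show 2 * x - x = x by ring, min_self, max_self])

end polar

theorem integral_mul_le_integral_mul_polar {k k' f : ℝ → ℝ} {b : ℝ} (hb : 0 < b)
    (hbπ : b < π) (hk : Continuous k) (hk' : Continuous k')
    (hf : IntervalIntegrable f volume (-π) π)
    (hf0 : ∀ y ∈ Icc (-π) π, 0 ≤ f y) (hle : ∀ y ∈ Icc (-π) b, k' y ≤ k y)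
    (hle_reflect : ∀ y ∈ Icc (2 * b - π) b, k' (2 * b - y) ≤ k y)
    (hadd_le : ∀ y ∈ Icc (2 * b - π) b, k' y + k' (2 * b - y) ≤ k y + k (2 * b - y)) :
    ∫ y in (-π)..π, k' y * f y ≤ ∫ y in (-π)..π, k y * polar b f y := by
  have hl : -π ≤ 2 * b - π := by linarith
  have hk'f : IntervalIntegrable (fun y => k' y * f y) volume (-π) π :=
    hf.continuousOn_mul hk'.continuousOn
  have hkf : IntervalIntegrable (fun y => k y * polar b f y) volume (-π) π :=
    (intervalIntegrable_polar hb hbπ hf).continuousOn_mul hk.continuousOn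
  rw [intervalIntegral.integral_eq_add_integral_add_reflect hk'f hl hbπ.le,
    intervalIntegral.integral_eq_add_integral_add_reflect hkf hl hbπ.le]
  gcongr ?_ + ?_
  · refine intervalIntegral.integral_mono_on_of_le_Ioo hl
      (hk'f.mono_Icc ⟨le_rfl, by linarith⟩ ⟨hl, by linarith⟩)
      (hkf.mono_Icc ⟨le_rfl, by linarith⟩ ⟨hl, by linarith⟩) fun y hy => ?_
    rw [polar_of_lt hb hy.2]
    exact mul_le_mul_of_nonneg_right (hle y ⟨hy.1.le, by linarith [hy.2]⟩)
      (hf0 y ⟨hy.1.le, by linarith [hy.2]⟩)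
  · refine intervalIntegral.integral_mono_on (by linarith)
      ((hk'f.mono_Icc ⟨hl, by linarith⟩ ⟨by linarith, hbπ.le⟩).add
        (hk'f.comp_reflect hl hbπ.le))
      ((hkf.mono_Icc ⟨hl, by linarith⟩ ⟨by linarith, hbπ.le⟩).add (hkf.comp_reflect hl hbπ.le))
      fun y hy => ?_
    rw [polar_of_mem_Icc hb hy, polar_reflect hb hbπ hy.2]
    exact mul_add_mul_le_mul_max_add_mul_min (hle y ⟨by linarith [hy.1], hy.2⟩)
      (hle_reflect y hy) (hadd_le y hy) (hf0 y ⟨by linarith [hy.1], by linarith [hy.2]⟩)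
      (hf0 _ ⟨by linarith [hy.2], by linarith [hy.1]⟩)

section robinSol

variable {α b x : ℝ} {f : ℝ → ℝ}

theorem robinSol_continuous (hf : IntervalIntegrable f volume (-π) π) :
    Continuous (robinSol α f) :=
  continuous_intervalIntegral_mul_of_abs_sub_le (by linarith [pi_pos])
    (fun x => (robinGreen.continuous α x).continuousOn)
    (fun _ _ _ hy => robinGreen.abs_sub_le α (abs_le.2 hy)) hf

theorem robinSol_nonneg (hα : 0 < α) (hf0 : ∀ y ∈ Icc (-π) π, 0 ≤ f y)
    (hx : x ∈ Icc (-π) π) : 0 ≤ robinSol α f x :=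
  intervalIntegral.integral_nonneg (by linarith [pi_pos]) fun y hy =>
    mul_nonneg (robinGreen.nonneg hα hx hy) (hf0 y hy)

theorem robinSol_comp_neg (α : ℝ) (f : ℝ → ℝ) (x : ℝ) :
    robinSol α (fun t => f (-t)) x = robinSol α f (-x) := by
  have := intervalIntegral.integral_comp_neg (a := -π) (b := π)
    fun y => robinGreen α (-x) y * f y
  simpa only [robinSol, robinGreen.neg_neg, neg_neg] using this

theorem eLpNorm_robinSol_comp_neg (hf : IntervalIntegrable f volume (-π) π) (p : ℝ≥0∞) :
    eLpNorm (robinSol α fun t => f (-t)) p (volume.restrict (Icc (-π) π)) =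
      eLpNorm (robinSol α f) p (volume.restrict (Icc (-π) π)) := by
  rw [funext (robinSol_comp_neg α f)]
  exact eLpNorm_comp_neg_restrict_Icc (robinSol_continuous hf).aestronglyMeasurable

theorem robinSol_le_robinSol_polar (hα : 0 < α) (hb : 0 < b) (hbπ : b < π)
    (hf : IntervalIntegrable f volume (-π) π) (hf0 : ∀ y ∈ Icc (-π) π, 0 ≤ f y)
    (hx : x ∈ Icc (-π) b) : robinSol α f x ≤ robinSol α (polar b f) x :=
  integral_mul_le_integral_mul_polar hb hbπ (robinGreen.continuous α x)
    (robinGreen.continuous α x) hf hf0 (fun _ _ => le_rfl)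
    (fun _ hy => robinGreen.reflect_right_le hα hb.le hx hy)
    (fun _ _ => le_rfl)

theorem robinSol_reflect_le_robinSol_polar (hα : 0 < α) (hb : 0 < b) (hbπ : b < π)
    (hf : IntervalIntegrable f volume (-π) π) (hf0 : ∀ y ∈ Icc (-π) π, 0 ≤ f y)
    (hx : x ∈ Icc (2 * b - π) b) : robinSol α f (2 * b - x) ≤ robinSol α (polar b f) x :=
  integral_mul_le_integral_mul_polar hb hbπ (robinGreen.continuous α x)
    (robinGreen.continuous α (2 * b - x)) hf hf0
    (fun y hy => by
      simpa only [robinGreen.comm α _ y] using robinGreen.reflect_right_le hα hb.le hy hx)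
    (fun y hy => robinGreen.reflect_reflect_le hα hb.le hx.2 hy.2)
    (fun _ _ => robinGreen.reflect_add_reflect_le hα hb.le hx.2)

theorem robinSol_add_reflect_le_robinSol_polar (hα : 0 < α) (hb : 0 < b) (hbπ : b < π)
    (hf : IntervalIntegrable f volume (-π) π) (hf0 : ∀ y ∈ Icc (-π) π, 0 ≤ f y) :
    robinSol α f x + robinSol α f (2 * b - x) ≤
      robinSol α (polar b f) x + robinSol α (polar b f) (2 * b - x) := by
  have hsum : ∀ g : ℝ → ℝ, IntervalIntegrable g volume (-π) π →
      robinSol α g x + robinSol α g (2 * b - x) =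
        ∫ y in (-π)..π, (robinGreen α x y + robinGreen α (2 * b - x) y) * g y := fun g hg => by
    have hGg : ∀ z, IntervalIntegrable (fun y => robinGreen α z y * g y) volume (-π) π :=
      fun z => hg.continuousOn_mul (robinGreen.continuous α z).continuousOn
    simp only [robinSol, add_mul]
    exact (intervalIntegral.integral_add (hGg _) (hGg _)).symm
  rw [hsum f hf, hsum _ (intervalIntegrable_polar hb hbπ hf)]
  have hk := (robinGreen.continuous α x).add (robinGreen.continuous α (2 * b - x))
  refine integral_mul_le_integral_mul_polar hb hbπ hk hk hf hf0 (fun _ _ => le_rfl)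
    (fun y hy => ?_) (fun _ _ => le_rfl)
  have := robinGreen.reflect_add_reflect_le (y := x) hα hb.le hy.2
  simp only [robinGreen.comm α _ x, robinGreen.comm α _ (2 * b - x)] at this
  linarith

theorem eLpNorm_robinSol_le_polar_of_pos (hα : 0 < α) (hb : 0 < b) (hbπ : b < π)
    (hf : IntervalIntegrable f volume (-π) π) (hf0 : ∀ y ∈ Icc (-π) π, 0 ≤ f y)
    {p : ℝ≥0∞} (hp : 1 ≤ p) :
    eLpNorm (robinSol α f) p (volume.restrict (Icc (-π) π)) ≤
      eLpNorm (robinSol α (polar b f)) p (volume.restrict (Icc (-π) π)) := by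
  have hpolar := intervalIntegrable_polar hb hbπ hf
  refine eLpNorm_le_of_forall_convexOn_integral_le isCompact_Icc
    (robinSol_continuous hf).continuousOn (robinSol_continuous hpolar).continuousOn
    (fun φ hφc hφm hφ => ?_) hp
  have hππ : -π ≤ π := by linarith [pi_pos]
  simp only [integral_Icc_eq_integral_Ioc, ← intervalIntegral.integral_of_le hππ]
  exact intervalIntegral.integral_comp_le_of_majorized (by linarith) hbπ.le hφc hφm hφ
    (robinSol_continuous hf).continuousOn (robinSol_continuous hpolar).continuousOn
    (fun _ => robinSol_nonneg hα hf0)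
    (fun _ => robinSol_nonneg hα fun _ => polar_nonneg hb hbπ hf0)
    (fun _ => robinSol_le_robinSol_polar hα hb hbπ hf hf0)
    (fun _ => robinSol_reflect_le_robinSol_polar hα hb hbπ hf hf0)
    (fun _ _ => robinSol_add_reflect_le_robinSol_polar hα hb hbπ hf hf0)

end robinSol

/-- **Polarization and `L^p` norms.** -/
theorem polarization_Lp_norms
    (α : ℝ) (hα : 0 < α)
    (f : ℝ → ℝ) (hf : IntegrableOn f (Icc (-π) π))
    (hf0 : ∀ x ∈ Icc (-π) π, 0 ≤ f x)
    (b : ℝ) (hb : b ∈ Ioo (-π) 0 ∪ Ioo 0 π)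
    (p : ℝ≥0∞) (hp : 1 ≤ p) :
    eLpNorm (robinSol α f) p (volume.restrict (Icc (-π) π)) ≤
      eLpNorm (robinSol α (polar b f)) p (volume.restrict (Icc (-π) π)) := by
  have hfi : IntervalIntegrable f volume (-π) π :=
    (intervalIntegrable_iff_integrableOn_Icc_of_le (by linarith [pi_pos])).2 hf
  rcases hb with ⟨hπb, hb⟩ | ⟨hb, hbπ⟩
  · have hf'i : IntervalIntegrable (fun t => f (-t)) volume (-π) π := by
      simpa using (hfi.comp_sub_left 0).symm
    have key := eLpNorm_robinSol_le_polar_of_pos hα (neg_pos.2 hb) (by linarith) hf'i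
      (fun y hy => hf0 _ ⟨by linarith [hy.2], by linarith [hy.1]⟩) hp
    rw [← eLpNorm_robinSol_comp_neg hf'i,
      ← eLpNorm_robinSol_comp_neg (intervalIntegrable_polar (neg_pos.2 hb) (by linarith) hf'i)]
      at key
    simpa only [neg_neg, ← polar_neg hb hπb] using key
  · exact eLpNorm_robinSol_le_polar_of_pos hα hb hbπ hfi hf0 hp
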